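/- arXiv:2503.22811 — 2 statements merged into one kernel-verified Lean document; each statement's English description precedes it below -/
import Mathlib

section
/- Let d ≥ 2, y₁, …, yₙ ∈ ℝ^d mutually distinct, c₁, …, cₙ ∈ ℂ \ {0}, and suppose n ≥ 1. If the function ũ(τ, e₁, e₂) = Σⱼ cⱼ·exp(τ·(e₂·yⱼ))·exp(-i·√(1+τ²)·(e₁·yⱼ)) is bounded on ℝ × US^{d-1}, then n = 1 and y₁ = 0 (so ũ ≡ c₁). -/
open scoped RealInnerProductSpace

/-!
If some `yₖ ≠ 0`, choose a unit vector `e₂` on which the projections `⟪e₂, yⱼ⟫` are pairwise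
distinct and `⟪e₂, yₖ⟫ > 0`; this is possible because only finitely many hyperplanes have to be
avoided. With any unit `e₁ ⊥ e₂`, the second factor of every term of `ũ`
has modulus one, so along `τ → ∞` the term with the largest projection grows strictly faster
than all the others together, and `ũ` is unbounded. Hence all `yⱼ` vanish, and injectivity
forces `n = 1`.
-/

open Filter Asymptotics

section Directions

variable {E : Type*} [NormedAddCommGroup E] [InnerProductSpace ℝ E]

theorem exists_forall_inner_ne_zero {κ : Type*} [Finite κ] (w : κ → E) (hw : ∀ i, w i ≠ 0) :
    ∃ v : E, ∀ i, ⟪v, w i⟫ ≠ 0 := by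
  let p : κ → Submodule ℝ E := fun i => LinearMap.ker (innerSL ℝ (w i) : E →ₗ[ℝ] ℝ)
  have hcover : ⋃ i, (p i : Set E) ≠ Set.univ := by
    intro hcover
    obtain ⟨i, hi⟩ := Subspace.exists_eq_top_of_iUnion_eq_univ hcover
    have hwi : w i ∈ p i := hi ▸ Submodule.mem_top
    exact inner_self_ne_zero.mpr (hw i) hwi
  obtain ⟨v, hv⟩ := (Set.ne_univ_iff_exists_notMem _).mp hcover
  refine ⟨v, fun i hvi => hv (Set.mem_iUnion.mpr ⟨i, ?_⟩)⟩
  change ⟪w i, v⟫ = 0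
  rwa [real_inner_comm]

theorem exists_norm_eq_one_inner_pos_and_injective {ι : Type*} [Finite ι] {y : ι → E}
    (hy : Function.Injective y) {k : ι} (hk : y k ≠ 0) :
    ∃ e : E, ‖e‖ = 1 ∧ 0 < ⟪e, y k⟫ ∧ Function.Injective fun j => ⟪e, y j⟫ := by
  let w : Option {p : ι × ι // p.1 ≠ p.2} → E := fun o => o.elim (y k) fun p => y p.1.1 - y p.1.2
  have hw : ∀ o, w o ≠ 0 := by
    rintro (_ | ⟨⟨j, l⟩, hjl⟩)
    · exact hk
    · exact sub_ne_zero.mpr (hy.ne hjl)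
  obtain ⟨v, hv⟩ := exists_forall_inner_ne_zero w hw
  have hvk : ⟪v, y k⟫ ≠ 0 := hv none
  -- Rescaling `v` by `⟪v, yₖ⟫` makes the projection of `yₖ` equal to `⟪v, yₖ⟫² > 0`.
  let u : E := ⟪v, y k⟫ • v
  have hu : u ≠ 0 := smul_ne_zero hvk fun h => hvk (by simp [h])
  have hproj : ∀ j, ⟪NormedSpace.normalize u, y j⟫ = ‖u‖⁻¹ * ⟪v, y k⟫ * ⟪v, y j⟫ := fun j => by
    rw [NormedSpace.normalize, real_inner_smul_left, real_inner_smul_left, mul_assoc]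
  have hscale : ‖u‖⁻¹ * ⟪v, y k⟫ ≠ 0 := mul_ne_zero (inv_ne_zero (norm_ne_zero_iff.mpr hu)) hvk
  refine ⟨NormedSpace.normalize u, NormedSpace.norm_normalize hu, ?_, fun j l hjl => ?_⟩
  · rw [hproj, mul_assoc, ← sq]
    have : 0 < ‖u‖ := norm_pos_iff.mpr hu
    positivity
  · by_contra hne
    refine hv (some ⟨(j, l), hne⟩) ?_
    simp only [hproj] at hjl
    simp [w, inner_sub_right, mul_left_cancel₀ hscale hjl]

theorem exists_norm_eq_one_inner_eq_zero [FiniteDimensional ℝ E] (hE : 2 ≤ Module.finrank ℝ E)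
    (v : E) : ∃ e : E, ‖e‖ = 1 ∧ ⟪e, v⟫ = 0 := by
  obtain ⟨b, hb, hb0⟩ : ∃ b ∈ (ℝ ∙ v)ᗮ, b ≠ 0 := by
    refine Submodule.exists_mem_ne_zero_of_ne_bot fun hbot => ?_
    have hsum := Submodule.finrank_add_finrank_orthogonal (ℝ ∙ v)
    have hline : Module.finrank ℝ (ℝ ∙ v) ≤ 1 :=
      (finrank_span_le_card ({v} : Set E)).trans (by simp)
    rw [hbot, finrank_bot] at hsum
    omega
  refine ⟨NormedSpace.normalize b, NormedSpace.norm_normalize hb0, ?_⟩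
  rw [NormedSpace.normalize, real_inner_smul_left, real_inner_comm,
    Submodule.mem_orthogonal_singleton_iff_inner_right.mp hb, mul_zero]

end Directions

theorem tendsto_norm_sum_atTop_of_norm_eq_mul_exp {ι F : Type*} [Fintype ι]
    [SeminormedAddCommGroup F] {z : ι → ℝ → F} {r a : ι → ℝ}
    (hz : ∀ j τ, ‖z j τ‖ = r j * Real.exp (τ * a j)) (hr : ∀ j, 0 < r j)
    (ha : Function.Injective a) {k : ι} (hk : 0 < a k) :
    Tendsto (fun τ => ‖∑ j, z j τ‖) atTop atTop := by
  classical
  have : Nonempty ι := ⟨k⟩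
  obtain ⟨j₀, hj₀⟩ := Finite.exists_max a
  have hlt : ∀ j ∈ Finset.univ.erase j₀, a j < a j₀ := fun j hj =>
    (hj₀ j).lt_of_ne (ha.ne (Finset.ne_of_mem_erase hj))
  have hlead : Tendsto (fun τ => ‖z j₀ τ‖) atTop atTop := by
    simp only [hz]
    exact (Real.tendsto_exp_atTop.comp
      (tendsto_id.atTop_mul_const (hk.trans_le (hj₀ k)))).const_mul_atTop (hr j₀)
  have hrest : (fun τ => ∑ j ∈ Finset.univ.erase j₀, ‖z j τ‖) =o[atTop] fun τ => ‖z j₀ τ‖ := by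
    refine IsLittleO.fun_sum fun j hj => ?_
    simp only [hz]
    refine ((Real.isLittleO_exp_comp_exp_comp.mpr ?_).const_mul_left (r j)).const_mul_right'
      (hr j₀).ne'.isUnit
    simpa only [← mul_sub, id] using tendsto_id.atTop_mul_const (sub_pos.mpr (hlt j hj))
  have hlower : ∀ τ, ‖z j₀ τ‖ - ∑ j ∈ Finset.univ.erase j₀, ‖z j τ‖ ≤ ‖∑ j, z j τ‖ := by
    intro τ
    rw [← Finset.add_sum_erase _ _ (Finset.mem_univ j₀)]
    calc ‖z j₀ τ‖ - ∑ j ∈ Finset.univ.erase j₀, ‖z j τ‖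
        ≤ ‖z j₀ τ‖ - ‖∑ j ∈ Finset.univ.erase j₀, z j τ‖ := by gcongr; exact norm_sum_le _ _
      _ ≤ ‖z j₀ τ + ∑ j ∈ Finset.univ.erase j₀, z j τ‖ := norm_sub_le_norm_add _ _
  have hequiv := hrest.neg_left.add_isEquivalent (IsEquivalent.refl (u := fun τ => ‖z j₀ τ‖))
  exact tendsto_atTop_mono hlower
    ((hequiv.symm.tendsto_atTop hlead).congr fun τ => neg_add_eq_sub _ _)

theorem norm_mul_exp_ofReal_mul_exp_neg_I_mul_ofReal (c : ℂ) (s θ : ℝ) :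
    ‖c * Complex.exp s * Complex.exp (-Complex.I * θ)‖ = ‖c‖ * Real.exp s := by
  simp [Complex.norm_exp]

/-- Case (ii) in the proof of Proposition 1: if
`ũ(τ,e₁,e₂) = ∑ⱼ cⱼ exp(τ (e₂·yⱼ)) exp(-i √(1+τ²) (e₁·yⱼ))` is bounded on `ℝ × US^{d-1}`
(with mutually distinct `yⱼ`, nonzero `cⱼ`, `n ≥ 1`), then `n = 1` and `y₁ = 0`. -/
theorem stmt4 (d n : ℕ) (hd : 2 ≤ d) (hn : 1 ≤ n)
    (y : Fin n → EuclideanSpace ℝ (Fin d)) (hy : Function.Injective y)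
    (c : Fin n → ℂ) (hc : ∀ j, c j ≠ 0)
    (hbdd : ∃ M : ℝ, ∀ (τ : ℝ) (e₁ e₂ : EuclideanSpace ℝ (Fin d)),
      ‖e₁‖ = 1 → ‖e₂‖ = 1 → ⟪e₁, e₂⟫ = 0 →
      ‖∑ j, c j * Complex.exp ((τ * ⟪e₂, y j⟫ : ℝ)) *
        Complex.exp (-Complex.I * (Real.sqrt (1 + τ ^ 2) * ⟪e₁, y j⟫ : ℝ))‖ ≤ M) :
    n = 1 ∧ ∀ j, y j = 0 := by
  obtain ⟨M, hM⟩ := hbdd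
  have hzero : ∀ k, y k = 0 := by
    intro k
    by_contra hk
    obtain ⟨e₂, he₂, hpos, hinj⟩ := exists_norm_eq_one_inner_pos_and_injective hy hk
    obtain ⟨e₁, he₁, horth⟩ :=
      exists_norm_eq_one_inner_eq_zero (by rwa [finrank_euclideanSpace_fin]) e₂
    have hunbdd := tendsto_norm_sum_atTop_of_norm_eq_mul_exp
      (fun j τ => norm_mul_exp_ofReal_mul_exp_neg_I_mul_ofReal (c j) (τ * ⟪e₂, y j⟫)
        (Real.sqrt (1 + τ ^ 2) * ⟪e₁, y j⟫))
      (fun j => norm_pos_iff.mpr (hc j)) hinj hpos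
    obtain ⟨τ, hτ⟩ := (hunbdd.eventually_gt_atTop M).exists
    exact (hM τ e₁ e₂ he₁ he₂ horth).not_gt hτ
  have hsub : Subsingleton (Fin n) := ⟨fun i j => hy (by rw [hzero i, hzero j])⟩
  refine ⟨le_antisymm ?_ hn, hzero⟩
  simpa using Fintype.card_le_one_iff_subsingleton.mpr hsub
end

section
/- Let A be an invertible n×n complex matrix, let k ∈ ℝ^d with d ≥ 2, |k| = κ > 0, and let y₁, …, yₙ ∈ ℝ^d be mutually distinct. Fix j ∈ {1,…,n} and define q_j(k) = Σ_{l=1}^{n} (A⁻¹)_{j,l}·exp(i k·y_l) for k ∈ S_κ^{d-1} (the sphere of radius κ). Then q_j is not identically zero on S_κ^{d-1}. -/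
open scoped RealInnerProductSpace

/-!
Choose a direction `v` separating the points, `⟪v, y l⟫` pairwise distinct, and a unit vector
`w ⊥ v`; this is where `d ≥ 2` enters. On the circle `k = κ (cos θ • v + sin θ • w)` the sum is an
entire function of `θ`, so if it vanishes on the sphere it vanishes at `θ = π/2 + i arsinh t` for
every real `t`. There the `l`-th term has modulus `|cₗ| exp (κ t ⟪v, y l⟫)`, and letting
`t → ∞` the term with the largest `⟪v, y l⟫` among the nonzero coefficients would dominate all
others. Hence the row `j` of `A⁻¹` would vanish, which is impossible since `A⁻¹` is invertible.
-/

open Filter Topology Function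

section InnerProductSpace

variable {E : Type*} [NormedAddCommGroup E] [InnerProductSpace ℝ E]

theorem exists_norm_eq_injective_inner [Nontrivial E] {ι : Type*} [Finite ι] {y : ι → E}
    (hy : Injective y) {r : ℝ} (hr : 0 < r) :
    ∃ v : E, ‖v‖ = r ∧ Injective fun l => ⟪v, y l⟫ := by
  obtain ⟨e, he⟩ := exists_ne (0 : E)
  -- The functional indexed by `none` keeps `v` away from `0`.
  let f : Option {p : ι × ι // p.1 ≠ p.2} → Module.Dual ℝ E :=
    fun o => innerₛₗ ℝ (o.elim e fun p => y p.1.1 - y p.1.2)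
  obtain ⟨v, hv⟩ : ∃ v, ∀ o, f o v ≠ 0 := by
    refine Module.Dual.exists_forall_ne_zero_of_forall_exists f fun o =>
      ⟨o.elim e fun p => y p.1.1 - y p.1.2, ?_⟩
    rw [innerₛₗ_apply_apply, inner_self_ne_zero]
    rcases o with _ | ⟨⟨l, m⟩, hlm⟩
    exacts [he, sub_ne_zero.mpr (hy.ne hlm)]
  have hv0 : v ≠ 0 := fun h => hv none (by simp [f, h])
  refine ⟨(r / ‖v‖) • v, ?_, ?_⟩
  · rw [norm_smul, Real.norm_of_nonneg (by positivity),
      div_mul_cancel₀ _ (norm_ne_zero_iff.mpr hv0)]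
  · intro l m hlm
    by_contra hne
    refine hv (some ⟨(l, m), hne⟩) ?_
    simp only [real_inner_smul_left] at hlm
    simpa [f, inner_sub_left, real_inner_comm, sub_eq_zero] using
      mul_left_cancel₀ (by positivity) hlm

theorem exists_norm_eq_inner_eq_zero [FiniteDimensional ℝ E] (hE : 2 ≤ Module.finrank ℝ E)
    (v : E) {r : ℝ} (hr : 0 ≤ r) : ∃ w : E, ‖w‖ = r ∧ ⟪v, w⟫ = 0 := by
  have hspan : Module.finrank ℝ (ℝ ∙ v) ≤ 1 := by
    simpa using finrank_span_le_card (R := ℝ) ({v} : Set E)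
  have hsum := (ℝ ∙ v).finrank_add_finrank_orthogonal
  have : Nontrivial (ℝ ∙ v)ᗮ := Module.nontrivial_of_finrank_pos (R := ℝ) (by omega)
  obtain ⟨⟨w, hw⟩, hwr⟩ := exists_norm_eq (ℝ ∙ v)ᗮ hr
  exact ⟨w, hwr, Submodule.inner_right_of_mem_orthogonal (Submodule.mem_span_singleton_self v) hw⟩

theorem norm_cos_smul_add_sin_smul {v w : E} {r : ℝ} (hr : 0 ≤ r) (hv : ‖v‖ = r) (hw : ‖w‖ = r)
    (hvw : ⟪v, w⟫ = 0) (θ : ℝ) : ‖Real.cos θ • v + Real.sin θ • w‖ = r := by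
  have hsq : ‖Real.cos θ • v + Real.sin θ • w‖ ^ 2 = r ^ 2 := by
    rw [norm_add_sq_real, norm_smul, norm_smul, real_inner_smul_left, real_inner_smul_right, hvw,
      hv, hw, Real.norm_eq_abs, Real.norm_eq_abs, mul_pow, mul_pow, sq_abs, sq_abs]
    linear_combination r ^ 2 * Real.sin_sq_add_cos_sq θ
  exact (sq_eq_sq₀ (norm_nonneg _) hr).mp hsq

end InnerProductSpace

theorem Differentiable.eq_zero_of_forall_ofReal_eq_zero {E : Type*} [NormedAddCommGroup E]
    [NormedSpace ℂ E] [CompleteSpace E] {F : ℂ → E} (hF : Differentiable ℂ F)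
    (h : ∀ x : ℝ, F x = 0) : F = 0 := by
  have hreal : Tendsto ((↑) : ℝ → ℂ) (𝓝[≠] 0) (𝓝[≠] 0) :=
    tendsto_nhdsWithin_of_tendsto_nhds_of_eventually_within _
      (Complex.continuous_ofReal.tendsto' 0 0 Complex.ofReal_zero |>.mono_left nhdsWithin_le_nhds)
      (eventually_nhdsWithin_of_forall fun x hx => by simpa using hx)
  funext z
  exact (hF.differentiableOn.analyticOnNhd isOpen_univ)
    |>.eqOn_zero_of_preconnected_of_frequently_eq_zero isPreconnected_univ (Set.mem_univ 0)
      (hreal.frequently (.of_forall h)) (Set.mem_univ z)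

open Complex in
theorem sum_mul_exp_sqrt_eq_zero_of_forall_cos_sin {ι : Type*} [Fintype ι] {c : ι → ℂ}
    {a b : ι → ℝ}
    (h : ∀ θ : ℝ, ∑ l, c l * exp (I * ↑(Real.cos θ * a l + Real.sin θ * b l)) = 0) (t : ℝ) :
    ∑ l, c l * ↑(Real.exp (t * a l)) * exp (I * ↑(√(1 + t ^ 2) * b l)) = 0 := by
  set F : ℂ → ℂ := fun z => ∑ l, c l * exp (I * (cos z * a l + sin z * b l))
  have hF : F = 0 := by
    refine Differentiable.eq_zero_of_forall_ofReal_eq_zero (by fun_prop) fun θ => ?_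
    simpa [F] using h θ
  -- `z = π/2 + i arsinh t` has `cos z = -i t` and `sin z = √(1 + t²)`.
  have hz := congrFun hF (↑(Real.pi / 2) + ↑(Real.arsinh t) * I)
  have hcos : cos (↑(Real.pi / 2) + ↑(Real.arsinh t) * I) = -t * I := by
    simp [cos_add, cos_mul_I, sin_mul_I, ← ofReal_sinh, Real.sinh_arsinh]
  have hsin : sin (↑(Real.pi / 2) + ↑(Real.arsinh t) * I) = ↑(√(1 + t ^ 2)) := by
    simp [sin_add, cos_mul_I, sin_mul_I, ← ofReal_cosh, Real.cosh_arsinh]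
  simp only [F, hcos, hsin, Pi.zero_apply] at hz
  rw [← hz]
  refine Finset.sum_congr rfl fun l _ => ?_
  rw [ofReal_exp, mul_assoc, ← exp_add]
  congr 2
  push_cast
  linear_combination ((t : ℂ) * a l) * I_sq

theorem eq_zero_of_forall_sum_mul_exp_mul_eq_zero {ι : Type*} [Fintype ι] {a : ι → ℝ}
    (ha : Injective a) {c : ι → ℂ} {u : ι → ℝ → ℂ} (hu : ∀ l t, ‖u l t‖ = 1)
    (h : ∀ᶠ t in atTop, ∑ l, c l * Real.exp (t * a l) * u l t = 0) : c = 0 := by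
  classical
  by_contra hc
  obtain ⟨L, hL, hmax⟩ := (Finset.univ.filter (c · ≠ 0)).exists_max_image a
    (by simpa [Finset.filter_nonempty_iff, funext_iff] using hc)
  set r : ι → ℝ → ℂ := fun m t => c m * Real.exp (t * (a m - a L)) * u m t
  have hr : ∀ m t, ‖r m t‖ = ‖c m‖ * Real.exp (t * (a m - a L)) := fun m t => by
    rw [norm_mul, norm_mul, hu, Complex.norm_real, Real.norm_of_nonneg (Real.exp_pos _).le,
      mul_one]
  have hdecay : ∀ m ∈ Finset.univ.erase L, Tendsto (fun t => ‖r m t‖) atTop (𝓝 0) := by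
    intro m hm
    simp only [hr]
    by_cases hcm : c m = 0
    · simp [hcm]
    have hlt : a m - a L < 0 := sub_neg.mpr <| (hmax m (by simpa using hcm)).lt_of_ne
      (ha.ne (Finset.ne_of_mem_erase hm))
    simpa using (Real.tendsto_exp_atBot.comp
      (tendsto_id.atTop_mul_const_of_neg hlt)).const_mul ‖c m‖
  have hrest : ∀ᶠ t in atTop, ‖∑ m ∈ Finset.univ.erase L, r m t‖ = ‖c L‖ := by
    filter_upwards [h] with t ht
    have hsum : ∑ m, r m t = 0 := by
      have : ∑ m, r m t =
          (∑ m, c m * Real.exp (t * a m) * u m t) * ↑(Real.exp (-(t * a L))) := by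
        rw [Finset.sum_mul]
        refine Finset.sum_congr rfl fun m _ => ?_
        simp only [r]
        rw [mul_sub, sub_eq_add_neg, Real.exp_add, Complex.ofReal_mul]
        ring
      rw [this, ht, zero_mul]
    rw [← Finset.add_sum_erase _ _ (Finset.mem_univ L), add_eq_zero_iff_neg_eq] at hsum
    rw [← hsum, norm_neg, hr, sub_self, mul_zero, Real.exp_zero, mul_one]
  have hlim : Tendsto (fun t => ‖∑ m ∈ Finset.univ.erase L, r m t‖) atTop (𝓝 0) :=
    squeeze_zero (fun _ => norm_nonneg _) (fun t => norm_sum_le _ _)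
      (by simpa using tendsto_finsetSum _ hdecay)
  have hcL : c L ≠ 0 := by simpa using hL
  exact hcL <| norm_eq_zero.mp <|
    tendsto_nhds_unique (tendsto_const_nhds.congr' (hrest.mono fun _ => Eq.symm)) hlim

/-- Lemma 1: with `A` invertible and mutually distinct `y₁,…,yₙ ∈ ℝ^d`, `d ≥ 2`,
the function `qⱼ(k) = ∑ₗ (A⁻¹)ⱼₗ exp(i k·yₗ)` is not identically zero on the sphere
of radius `κ > 0`. -/
theorem stmt9 (d n : ℕ) (hd : 2 ≤ d) (A : Matrix (Fin n) (Fin n) ℂ)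
    (hA : IsUnit A.det) (κ : ℝ) (hκ : 0 < κ)
    (y : Fin n → EuclideanSpace ℝ (Fin d)) (hy : Function.Injective y) (j : Fin n) :
    ¬ (∀ k : EuclideanSpace ℝ (Fin d), ‖k‖ = κ →
        ∑ l, A⁻¹ j l * Complex.exp (Complex.I * (⟪k, y l⟫ : ℝ)) = 0) := by
  intro h
  have hrow : A⁻¹ j ≠ 0 := fun h0 => (A.isUnit_nonsing_inv_det hA).ne_zero
    (Matrix.det_eq_zero_of_row_eq_zero j (congrFun h0))
  have hfinrank : 2 ≤ Module.finrank ℝ (EuclideanSpace ℝ (Fin d)) := by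
    rwa [finrank_euclideanSpace_fin]
  have : Nontrivial (EuclideanSpace ℝ (Fin d)) :=
    Module.nontrivial_of_finrank_pos (R := ℝ) (by omega)
  obtain ⟨v, hv, hvy⟩ := exists_norm_eq_injective_inner hy hκ
  obtain ⟨w, hw, hvw⟩ := exists_norm_eq_inner_eq_zero hfinrank v hκ.le
  refine hrow <| eq_zero_of_forall_sum_mul_exp_mul_eq_zero hvy
    (u := fun l t => Complex.exp (Complex.I * ↑(√(1 + t ^ 2) * ⟪w, y l⟫)))
    (fun l t => by rw [mul_comm, Complex.norm_exp_ofReal_mul_I])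
    (.of_forall <| sum_mul_exp_sqrt_eq_zero_of_forall_cos_sin (b := fun l => ⟪w, y l⟫)
      fun θ => ?_)
  simpa [inner_add_left, real_inner_smul_left] using
    h _ (norm_cos_smul_add_sin_smul hκ.le hv hw hvw θ)
end
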